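/- arXiv:1702.02614 — 2 statements merged into one kernel-verified Lean document; each statement's English description precedes it below -/
import Mathlib

section
/- det(G_k) = −((1+ζ_k)(1+conj(ζ_k)))^{k−1}; that is, the determinant of the (2k−2)×(2k−2) matrix G_k equals −|1+ζ_k|^{2k−2}. -/
noncomputable section

open Matrix Complex
open scoped Pointwise

/-- `ζ_k = exp(2πi/k)`, a primitive `k`-th root of unity. -/
def zetaC (k : ℕ) : ℂ := Complex.exp (2 * Real.pi * Complex.I / k)

/-- `ℤ[ζ_k]`, the subring of `ℂ` generated by `ζ_k`. -/
def Rk (k : ℕ) : Subring ℂ := Subring.closure {zetaC k}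

/-- The Hermitian form `x ⋆ y = ∑ conj(x i) * A i j * y j` attached to a Gram matrix `A`. -/
def hermF {n : ℕ} (A : Matrix (Fin n) (Fin n) ℂ) (x y : Fin n → ℂ) : ℂ :=
  ∑ i, ∑ j, (starRingEnd ℂ) (x i) * A i j * y j

/-- The tridiagonal Gram matrix `G_k`. -/
def Gmat (k n : ℕ) : Matrix (Fin n) (Fin n) ℂ :=
  Matrix.of fun i j =>
    if i = j then -((1 + zetaC k) * (1 + (starRingEnd ℂ) (zetaC k)))
    else if (i : ℕ) + 1 = (j : ℕ) then 1 + (starRingEnd ℂ) (zetaC k)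
    else if (j : ℕ) + 1 = (i : ℕ) then 1 + zetaC k
    else 0

lemma sub_succ (k n : ℕ) : (Gmat k (n+1)).submatrix Fin.succ Fin.succ = Gmat k n := by
  ext i j
  simp [Gmat, Fin.succ_inj, Fin.val_succ]

lemma det_G1 (k : ℕ) : (Gmat k 1).det = -((1 + zetaC k) * (1 + (starRingEnd ℂ) (zetaC k))) := by
  simp [Matrix.det_fin_one, Gmat]

lemma det_G2 (k : ℕ) : (Gmat k 2).det =
    ((1 + zetaC k) * (1 + (starRingEnd ℂ) (zetaC k)))^2
      - (1 + zetaC k) * (1 + (starRingEnd ℂ) (zetaC k)) := by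
  rw [Matrix.det_fin_two]
  simp [Gmat]
  ring

lemma succAbove_one_succ (n : ℕ) (l : Fin n) :
    (1 : Fin (n+2)).succAbove l.succ = l.succ.succ := by
  rw [Fin.succAbove_of_le_castSucc]
  simp [Fin.le_def]

lemma det_rec (k n : ℕ) : (Gmat k (n+2)).det =
    -((1 + zetaC k) * (1 + (starRingEnd ℂ) (zetaC k))) *
      ((Gmat k (n+1)).det + (Gmat k n).det) := by
  rw [Matrix.det_succ_row_zero, Fin.sum_univ_succ, Fin.sum_univ_succ]
  have hzero : ∀ j : Fin n, Gmat k (n+2) 0 j.succ.succ = 0 := by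
    intro j
    simp [Gmat, Fin.ext_iff]
  rw [Finset.sum_eq_zero (fun j _ => by rw [hzero]; ring)]
  have h00 : Gmat k (n+2) 0 0 = -((1 + zetaC k) * (1 + (starRingEnd ℂ) (zetaC k))) := by
    simp [Gmat]
  have h01 : Gmat k (n+2) 0 (Fin.succ 0) = 1 + (starRingEnd ℂ) (zetaC k) := by
    simp [Gmat, Fin.ext_iff]
  have hminor0 : (Gmat k (n+2)).submatrix Fin.succ ((0 : Fin (n+2)).succAbove)
      = Gmat k (n+1) := by
    rw [Fin.succAbove_zero, sub_succ]
  have hminor1 : ((Gmat k (n+2)).submatrix Fin.succ ((Fin.succ 0 : Fin (n+2)).succAbove)).det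
      = (1 + zetaC k) * (Gmat k n).det := by
    rw [Matrix.det_succ_column_zero, Fin.sum_univ_succ]
    have hz : ∀ i : Fin n,
        (Gmat k (n+2)).submatrix Fin.succ ((Fin.succ 0 : Fin (n+2)).succAbove) i.succ 0 = 0 := by
      intro i
      have h0 : ((Fin.succ 0 : Fin (n+2)).succAbove 0) = 0 := by
        rw [Fin.succAbove_of_castSucc_lt] <;> simp [Fin.lt_def]
      simp [Matrix.submatrix_apply, h0, Gmat, Fin.ext_iff]
    rw [Finset.sum_eq_zero (fun i _ => by rw [hz]; ring)]
    have h10 : (Gmat k (n+2)).submatrix Fin.succ ((Fin.succ 0 : Fin (n+2)).succAbove) 0 0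
        = 1 + zetaC k := by
      have h0 : ((Fin.succ 0 : Fin (n+2)).succAbove 0) = 0 := by
        rw [Fin.succAbove_of_castSucc_lt] <;> simp [Fin.lt_def]
      simp [Matrix.submatrix_apply, h0, Gmat, Fin.ext_iff]
    have hcol : ((Fin.succ 0 : Fin (n+2)).succAbove) ∘ Fin.succ
        = Fin.succ ∘ (Fin.succ : Fin n → Fin (n+1)) := by
      funext l
      exact succAbove_one_succ n l
    rw [h10, Matrix.submatrix_submatrix, Fin.succAbove_zero, hcol,
      ← Matrix.submatrix_submatrix, sub_succ, sub_succ]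
    simp
  rw [h00, h01, hminor0, hminor1]
  simp
  ring

lemma conj_zeta (k : ℕ) : (starRingEnd ℂ) (zetaC k) = Complex.exp (-(2 * Real.pi * Complex.I / k)) := by
  rw [zetaC, ← Complex.exp_conj]
  congr 1
  simp [map_div₀, Complex.conj_I, Complex.conj_ofNat]
  ring

lemma mul_conj_zeta (k : ℕ) : zetaC k * (starRingEnd ℂ) (zetaC k) = 1 := by
  rw [conj_zeta, zetaC, ← Complex.exp_add]
  simp

lemma add_conj_zeta (k : ℕ) :
    zetaC k + (starRingEnd ℂ) (zetaC k) = ((2 * Real.cos (2 * Real.pi / k) : ℝ) : ℂ) := by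
  have harg : (2 * (Real.pi:ℂ) * Complex.I / (k:ℂ)) = ((2 * Real.pi / k : ℝ) : ℂ) * Complex.I := by
    push_cast; ring
  have harg' : (-(2 * (Real.pi:ℂ) * Complex.I / (k:ℂ))) = ((-(2 * Real.pi / k) : ℝ) : ℂ) * Complex.I := by
    push_cast; ring
  have hneg : -((((2 * Real.pi / k : ℝ)):ℂ) * Complex.I) = ((-(2 * Real.pi / k) : ℝ) : ℂ) * Complex.I := by
    push_cast; ring
  rw [conj_zeta, zetaC, harg, hneg, Complex.exp_mul_I, Complex.exp_mul_I,
    Complex.ofReal_neg, Complex.cos_neg, Complex.sin_neg, ← Complex.ofReal_cos]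
  push_cast
  ring

lemma hc3 : (1 + zetaC 3) * (1 + (starRingEnd ℂ) (zetaC 3)) = 1 := by
  have h1 := mul_conj_zeta 3
  have h2 := add_conj_zeta 3
  have hcos : Real.cos (2 * Real.pi / 3) = -(1/2) := by
    have : (2 * Real.pi / 3) = Real.pi - Real.pi / 3 := by ring
    rw [this, Real.cos_pi_sub, Real.cos_pi_div_three]
  rw [Nat.cast_ofNat, hcos] at h2
  push_cast at h2
  linear_combination h1 + h2

lemma hc4 : (1 + zetaC 4) * (1 + (starRingEnd ℂ) (zetaC 4)) = 2 := by
  have h1 := mul_conj_zeta 4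
  have h2 := add_conj_zeta 4
  have hcos : Real.cos (2 * Real.pi / 4) = 0 := by
    have : (2 * Real.pi / 4) = Real.pi / 2 := by ring
    rw [this, Real.cos_pi_div_two]
  rw [Nat.cast_ofNat, hcos] at h2
  push_cast at h2
  linear_combination h1 + h2

lemma hc6 : (1 + zetaC 6) * (1 + (starRingEnd ℂ) (zetaC 6)) = 3 := by
  have h1 := mul_conj_zeta 6
  have h2 := add_conj_zeta 6
  have hcos : Real.cos (2 * Real.pi / 6) = 1/2 := by
    have : (2 * Real.pi / 6) = Real.pi / 3 := by ring
    rw [this, Real.cos_pi_div_three]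
  rw [Nat.cast_ofNat, hcos] at h2
  push_cast at h2
  linear_combination h1 + h2


lemma det_rec' (k n m p : ℕ) (hm : m = n + 2) (hp : p = n + 1) : (Gmat k m).det =
    -((1 + zetaC k) * (1 + (starRingEnd ℂ) (zetaC k))) *
      ((Gmat k p).det + (Gmat k n).det) := by
  subst hm; subst hp; exact det_rec k n

/-- The determinant of the `(2k−2)×(2k−2)` Gram matrix `G_k` equals
`−((1+ζ_k)(1+conj ζ_k))^{k−1} = −|1+ζ_k|^{2k−2}`. -/
theorem det_Gk (k : ℕ) (hk : k ∈ ({3, 4, 6} : Set ℕ)) :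
    (Gmat k (2 * k - 2)).det =
      -((1 + zetaC k) * (1 + (starRingEnd ℂ) (zetaC k))) ^ (k - 1) := by
  rcases hk with rfl | rfl | rfl
  · have h1 : (Gmat 3 1).det = -1 := by rw [det_G1, hc3]
    have h2 : (Gmat 3 2).det = 0 := by rw [det_G2, hc3]; norm_num
    have h3 : (Gmat 3 3).det = 1 := by rw [det_rec' 3 1 3 2 rfl rfl, h2, h1, hc3]; norm_num
    have h4 : (Gmat 3 4).det = -1 := by rw [det_rec' 3 2 4 3 rfl rfl, h3, h2, hc3]; norm_num
    rw [show 2*3-2 = 4 from by norm_num, h4, hc3]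
    norm_num
  · have h1 : (Gmat 4 1).det = -2 := by rw [det_G1, hc4]
    have h2 : (Gmat 4 2).det = 2 := by rw [det_G2, hc4]; norm_num
    have h3 : (Gmat 4 3).det = 0 := by rw [det_rec' 4 1 3 2 rfl rfl, h2, h1, hc4]; norm_num
    have h4 : (Gmat 4 4).det = -4 := by rw [det_rec' 4 2 4 3 rfl rfl, h3, h2, hc4]; norm_num
    have h5 : (Gmat 4 5).det = 8 := by rw [det_rec' 4 3 5 4 rfl rfl, h4, h3, hc4]; norm_num
    have h6 : (Gmat 4 6).det = -8 := by rw [det_rec' 4 4 6 5 rfl rfl, h5, h4, hc4]; norm_num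
    rw [show 2*4-2 = 6 from by norm_num, h6, hc4]
    norm_num
  · have h1 : (Gmat 6 1).det = -3 := by rw [det_G1, hc6]
    have h2 : (Gmat 6 2).det = 6 := by rw [det_G2, hc6]; norm_num
    have h3 : (Gmat 6 3).det = -9 := by rw [det_rec' 6 1 3 2 rfl rfl, h2, h1, hc6]; norm_num
    have h4 : (Gmat 6 4).det = 9 := by rw [det_rec' 6 2 4 3 rfl rfl, h3, h2, hc6]; norm_num
    have h5 : (Gmat 6 5).det = 0 := by rw [det_rec' 6 3 5 4 rfl rfl, h4, h3, hc6]; norm_num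
    have h6 : (Gmat 6 6).det = -27 := by rw [det_rec' 6 4 6 5 rfl rfl, h5, h4, hc6]; norm_num
    have h7 : (Gmat 6 7).det = 81 := by rw [det_rec' 6 5 7 6 rfl rfl, h6, h5, hc6]; norm_num
    have h8 : (Gmat 6 8).det = -162 := by rw [det_rec' 6 6 8 7 rfl rfl, h7, h6, hc6]; norm_num
    have h9 : (Gmat 6 9).det = 243 := by rw [det_rec' 6 7 9 8 rfl rfl, h8, h7, hc6]; norm_num
    have h10 : (Gmat 6 10).det = -243 := by rw [det_rec' 6 8 10 9 rfl rfl, h9, h8, hc6]; norm_num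
    rw [show 2*6-2 = 10 from by norm_num, h10, hc6]
    norm_num

end
end

section
/- Suppose k = 6. Define x · y = (2/|1+ζ₆|²)·Re(x ⋆ y) = (2/3)·Re(x ⋆ y). Then (Λ, ·) is an even unimodular ℤ-lattice: x · y ∈ ℤ for all x, y ∈ Λ, v · v ∈ 2ℤ for all v ∈ Λ, and Λ equals its dual lattice Λ* = {x ∈ ℂ^n : x · v ∈ ℤ for all v ∈ Λ}. -/
noncomputable section

open Matrix Complex
open scoped Pointwise

/-- The real inner product `x · y = (2/|1+ζ_k|²) Re (x ⋆ y)`. -/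
def dotF {n : ℕ} (k : ℕ) (A : Matrix (Fin n) (Fin n) ℂ) (x y : Fin n → ℂ) : ℝ :=
  2 / Complex.normSq (1 + zetaC k) * (hermF A x y).re

/-! The element `θ = 1 + ζ₆` has norm `3`, and `ℤ[ζ₆]` is self-dual up to `conj θ` for the trace
form: `c ∈ conj θ · ℤ[ζ₆]` exactly when `(2/3) Re c` and `(2/3) Re (ζ₆ c)` are integers.
Modularity writes every `x ∈ Λ` as `θ d` with `d ∈ Λ^∨`, so `x ⋆ y ∈ conj θ · ℤ[ζ₆]` for
`x, y ∈ Λ`; this gives integrality, evenness (when `x ⋆ x` is real, `conj θ · (p + q ζ₆)` forces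
`p = q`) and, through the converse characterisation, `Λ* ⊆ θ Λ^∨ = Λ`. -/

local notation "θ" => (1 + zetaC 6 : ℂ)

section ZetaSix

lemma zetaC_six_eq : zetaC 6 = Complex.exp ((Real.pi / 3 : ℝ) * Complex.I) := by
  rw [zetaC]
  congr 1
  push_cast
  ring

lemma zetaC_six_re : (zetaC 6).re = 1 / 2 := by
  rw [zetaC_six_eq, Complex.exp_ofReal_mul_I_re, Real.cos_pi_div_three]

lemma zetaC_six_im : (zetaC 6).im = √3 / 2 := by
  rw [zetaC_six_eq, Complex.exp_ofReal_mul_I_im, Real.sin_pi_div_three]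

lemma zetaC_six_sq : zetaC 6 ^ 2 = zetaC 6 - 1 := by
  have hs := Real.sq_sqrt (show (0 : ℝ) ≤ 3 by norm_num)
  apply Complex.ext
  · simp only [pow_two, mul_re, zetaC_six_re, zetaC_six_im, sub_re, one_re]
    linear_combination -hs / 4
  · simp only [pow_two, mul_im, zetaC_six_re, zetaC_six_im, sub_im, one_im, sub_zero]
    ring

lemma zetaC_six_mem_Rk : zetaC 6 ∈ Rk 6 := Subring.subset_closure rfl

lemma mem_Rk_six_iff {a : ℂ} : a ∈ Rk 6 ↔ ∃ p q : ℤ, a = p + q * zetaC 6 := by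
  constructor
  · intro h
    induction h using Subring.closure_induction with
    | mem x hx => exact ⟨0, 1, by simp [Set.mem_singleton_iff.mp hx]⟩
    | zero => exact ⟨0, 0, by simp⟩
    | one => exact ⟨1, 0, by simp⟩
    | add x y _ _ hx hy =>
      obtain ⟨p, q, rfl⟩ := hx
      obtain ⟨p', q', rfl⟩ := hy
      exact ⟨p + p', q + q', by push_cast; ring⟩
    | neg x _ hx =>
      obtain ⟨p, q, rfl⟩ := hx
      exact ⟨-p, -q, by push_cast; ring⟩
    | mul x y _ _ hx hy =>
      obtain ⟨p, q, rfl⟩ := hx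
      obtain ⟨p', q', rfl⟩ := hy
      refine ⟨p * p' - q * q', p * q' + q * p' + q * q', ?_⟩
      push_cast
      linear_combination (q : ℂ) * q' * zetaC_six_sq
  · rintro ⟨p, q, rfl⟩
    exact add_mem (intCast_mem _ p) (mul_mem (intCast_mem _ q) zetaC_six_mem_Rk)

lemma normSq_one_add_zetaC_six : Complex.normSq θ = 3 := by
  simp only [normSq_apply, add_re, one_re, zetaC_six_re, add_im, one_im, zetaC_six_im]
  linear_combination Real.sq_sqrt (show (0 : ℝ) ≤ 3 by norm_num) / 4

lemma one_add_zetaC_six_ne_zero : θ ≠ 0 := by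
  intro h
  simpa [h] using normSq_one_add_zetaC_six

lemma re_conj_one_add_zetaC_six_mul (p q : ℤ) :
    (starRingEnd ℂ θ * (p + q * zetaC 6)).re = 3 / 2 * (p + q) := by
  simp only [map_add, map_one, mul_re, add_re, one_re, conj_re, zetaC_six_re, intCast_re,
    intCast_im, zetaC_six_im, add_im, one_im, conj_im, mul_im]
  linear_combination (q : ℝ) / 4 * Real.sq_sqrt (show (0 : ℝ) ≤ 3 by norm_num)

lemma im_conj_one_add_zetaC_six_mul (p q : ℤ) :
    (starRingEnd ℂ θ * (p + q * zetaC 6)).im = √3 / 2 * (q - p) := by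
  simp only [map_add, map_one, mul_im, add_re, one_re, conj_re, zetaC_six_re, add_im,
    intCast_im, intCast_re, zetaC_six_im, one_im, conj_im, mul_re]
  ring

lemma two_div_three_mul_re_conj_one_add_zetaC_six_mul_mem {a : ℂ} (ha : a ∈ Rk 6) :
    2 / 3 * (starRingEnd ℂ θ * a).re ∈ Set.range ((↑) : ℤ → ℝ) := by
  obtain ⟨p, q, rfl⟩ := mem_Rk_six_iff.mp ha
  exact ⟨p + q, by rw [re_conj_one_add_zetaC_six_mul]; push_cast; ring⟩

lemma exists_two_div_three_mul_re_conj_one_add_zetaC_six_mul_eq_two_mul {a : ℂ} (ha : a ∈ Rk 6)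
    (hreal : (starRingEnd ℂ θ * a).im = 0) :
    ∃ m : ℤ, 2 / 3 * (starRingEnd ℂ θ * a).re = 2 * m := by
  obtain ⟨p, q, rfl⟩ := mem_Rk_six_iff.mp ha
  have hqp : (q : ℝ) = p := by
    rw [im_conj_one_add_zetaC_six_mul] at hreal
    have := (mul_eq_zero.mp hreal).resolve_left (by positivity)
    linarith
  exact ⟨p, by rw [re_conj_one_add_zetaC_six_mul, hqp]; ring⟩

lemma exists_mem_Rk_six_eq_conj_one_add_zetaC_six_mul {c : ℂ}
    (hc : 2 / 3 * c.re ∈ Set.range ((↑) : ℤ → ℝ))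
    (hζc : 2 / 3 * (zetaC 6 * c).re ∈ Set.range ((↑) : ℤ → ℝ)) :
    ∃ a ∈ Rk 6, c = starRingEnd ℂ θ * a := by
  obtain ⟨m, hm⟩ := hc
  obtain ⟨l, hl⟩ := hζc
  have hs := Real.sq_sqrt (show (0 : ℝ) ≤ 3 by norm_num)
  have him : √3 * c.im = 3 * m / 2 - 3 * l := by
    rw [Complex.mul_re, zetaC_six_re, zetaC_six_im] at hl
    linear_combination 3 * hl - 3 / 2 * hm
  refine ⟨l + (m - l) * zetaC 6, mem_Rk_six_iff.mpr ⟨l, m - l, by push_cast; ring⟩, ?_⟩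
  apply Complex.ext
  · simp only [map_add, map_one, mul_re, add_re, one_re, conj_re, zetaC_six_re, intCast_re,
      sub_re, sub_im, intCast_im, zetaC_six_im, add_im, one_im, conj_im, mul_im]
    linear_combination (-3 / 2 : ℝ) * hm - ((m : ℝ) - l) / 4 * hs
  · simp only [map_add, map_one, mul_im, add_re, one_re, conj_re, zetaC_six_re, add_im,
      intCast_im, sub_re, intCast_re, zetaC_six_im, sub_im, one_im, conj_im, mul_re]
    linear_combination √3 / 3 * him - c.im / 3 * hs

end ZetaSix

section HermitianForm

variable {n : ℕ} (A : Matrix (Fin n) (Fin n) ℂ)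

lemma hermF_smul_left (c : ℂ) (x y : Fin n → ℂ) :
    hermF A (c • x) y = starRingEnd ℂ c * hermF A x y := by
  simp only [hermF, Finset.mul_sum, Pi.smul_apply, smul_eq_mul, map_mul]
  exact Finset.sum_congr rfl fun i _ => Finset.sum_congr rfl fun j _ => by ring

lemma hermF_smul_right (c : ℂ) (x y : Fin n → ℂ) :
    hermF A x (c • y) = c * hermF A x y := by
  simp only [hermF, Finset.mul_sum, Pi.smul_apply, smul_eq_mul]
  exact Finset.sum_congr rfl fun i _ => Finset.sum_congr rfl fun j _ => by ring

lemma dotF_six (x y : Fin n → ℂ) : dotF 6 A x y = 2 / 3 * (hermF A x y).re := by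
  rw [dotF, normSq_one_add_zetaC_six]

variable {A}

lemma Matrix.IsHermitian.conj_hermF (hA : A.IsHermitian) (x y : Fin n → ℂ) :
    starRingEnd ℂ (hermF A x y) = hermF A y x := by
  simp only [hermF, map_sum, map_mul, Complex.conj_conj]
  rw [Finset.sum_comm]
  refine Finset.sum_congr rfl fun j _ => Finset.sum_congr rfl fun i _ => ?_
  rw [show starRingEnd ℂ (A i j) = A j i from hA.apply j i]
  ring

lemma Matrix.IsHermitian.im_hermF_self (hA : A.IsHermitian) (x : Fin n → ℂ) :
    (hermF A x x).im = 0 :=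
  Complex.conj_eq_iff_im.mp (hA.conj_hermF x x)

end HermitianForm

section ModularLattice

variable {n : ℕ} {H : Matrix (Fin n) (Fin n) ℂ}

def zetaSixLattice (n : ℕ) : Set (Fin n → ℂ) := {x | ∀ i, x i ∈ Rk 6}

def hermDual (H : Matrix (Fin n) (Fin n) ℂ) : Set (Fin n → ℂ) :=
  {x | ∀ v ∈ zetaSixLattice n, hermF H x v ∈ Rk 6}

lemma exists_hermF_eq_conj_one_add_zetaC_six_mul
    (hmod : θ • hermDual H = zetaSixLattice n)
    {x y : Fin n → ℂ} (hx : x ∈ zetaSixLattice n) (hy : y ∈ zetaSixLattice n) :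
    ∃ a ∈ Rk 6, hermF H x y = starRingEnd ℂ θ * a := by
  obtain ⟨d, hd, rfl⟩ := (Set.ext_iff.mp hmod x).mpr hx
  exact ⟨hermF H d y, hd y hy, hermF_smul_left H _ d y⟩

lemma dotF_six_mem_range_intCast
    (hmod : θ • hermDual H = zetaSixLattice n)
    {x y : Fin n → ℂ} (hx : x ∈ zetaSixLattice n) (hy : y ∈ zetaSixLattice n) :
    dotF 6 H x y ∈ Set.range ((↑) : ℤ → ℝ) := by
  obtain ⟨a, ha, hxy⟩ := exists_hermF_eq_conj_one_add_zetaC_six_mul hmod hx hy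
  rw [dotF_six, hxy]
  exact two_div_three_mul_re_conj_one_add_zetaC_six_mul_mem ha

lemma exists_dotF_six_self_eq_two_mul (hherm : H.IsHermitian)
    (hmod : θ • hermDual H = zetaSixLattice n)
    {v : Fin n → ℂ} (hv : v ∈ zetaSixLattice n) :
    ∃ m : ℤ, dotF 6 H v v = 2 * (m : ℝ) := by
  obtain ⟨a, ha, hvv⟩ := exists_hermF_eq_conj_one_add_zetaC_six_mul hmod hv hv
  rw [dotF_six, hvv]
  exact exists_two_div_three_mul_re_conj_one_add_zetaC_six_mul_eq_two_mul ha
    (hvv ▸ hherm.im_hermF_self v)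

lemma mem_zetaSixLattice_of_forall_dotF_six_mem_range_intCast
    (hmod : θ • hermDual H = zetaSixLattice n) {x : Fin n → ℂ}
    (hx : ∀ v ∈ zetaSixLattice n, dotF 6 H x v ∈ Set.range ((↑) : ℤ → ℝ)) :
    x ∈ zetaSixLattice n := by
  suffices hdual : θ⁻¹ • x ∈ hermDual H by
    exact hmod ▸ ⟨θ⁻¹ • x, hdual, smul_inv_smul₀ one_add_zetaC_six_ne_zero x⟩
  intro v hv
  have hζv : zetaC 6 • v ∈ zetaSixLattice n := fun i => mul_mem zetaC_six_mem_Rk (hv i)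
  have hxζv := hx _ hζv
  rw [dotF_six, hermF_smul_right] at hxζv
  obtain ⟨a, ha, hxv⟩ := exists_mem_Rk_six_eq_conj_one_add_zetaC_six_mul
    (dotF_six H x v ▸ hx v hv) hxζv
  have hθ : starRingEnd ℂ θ ≠ 0 := (map_ne_zero _).mpr one_add_zetaC_six_ne_zero
  rwa [hermF_smul_left, hxv, map_inv₀, inv_mul_cancel_left₀ hθ]

end ModularLattice

theorem modular_lattice_k6_even_unimodular_general
    (n : ℕ)
    (H : Matrix (Fin n) (Fin n) ℂ)
    (hherm : H.IsHermitian)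
    (hmod : (1 + zetaC 6) •
        {x : Fin n → ℂ | ∀ v : Fin n → ℂ, (∀ i, v i ∈ Rk 6) → hermF H x v ∈ Rk 6} =
        {x : Fin n → ℂ | ∀ i, x i ∈ Rk 6}) :
    (∀ x y : Fin n → ℂ, (∀ i, x i ∈ Rk 6) → (∀ i, y i ∈ Rk 6) →
      dotF 6 H x y ∈ Set.range ((↑) : ℤ → ℝ)) ∧
    (∀ v : Fin n → ℂ, (∀ i, v i ∈ Rk 6) → ∃ m : ℤ, dotF 6 H v v = 2 * (m : ℝ)) ∧
    {x : Fin n → ℂ | ∀ v : Fin n → ℂ, (∀ i, v i ∈ Rk 6) →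
        dotF 6 H x v ∈ Set.range ((↑) : ℤ → ℝ)} =
      {x : Fin n → ℂ | ∀ i, x i ∈ Rk 6} :=
  ⟨fun _ _ hx hy => dotF_six_mem_range_intCast hmod hx hy,
    fun _ hv => exists_dotF_six_self_eq_two_mul hherm hmod hv,
    Set.ext fun _ => ⟨mem_zetaSixLattice_of_forall_dotF_six_mem_range_intCast hmod,
      fun hx _ hv => dotF_six_mem_range_intCast hmod hx hv⟩⟩

/-- Let `Λ = ℤ[ζ₆]^n` be a `(1+ζ₆)`-modular Hermitian lattice with Gram matrix `H`, and let
`x · y = (2/|1+ζ₆|²) Re(x ⋆ y) = (2/3) Re(x ⋆ y)`.  Then `(Λ, ·)` is an even unimodular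
`ℤ`-lattice: the form `·` is integer valued on `Λ`, `v · v` is even for `v ∈ Λ`, and `Λ`
equals its dual lattice `Λ*`. -/
theorem modular_lattice_k6_even_unimodular
    (n : ℕ) (hn : 1 ≤ n)
    (H : Matrix (Fin n) (Fin n) ℂ)
    (hentries : ∀ i j, H i j ∈ Rk 6)
    (hherm : H.IsHermitian)
    (hinv : IsUnit H.det)
    (hmod : (1 + zetaC 6) •
        {x : Fin n → ℂ | ∀ v : Fin n → ℂ, (∀ i, v i ∈ Rk 6) → hermF H x v ∈ Rk 6} =
        {x : Fin n → ℂ | ∀ i, x i ∈ Rk 6}) :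
    (∀ x y : Fin n → ℂ, (∀ i, x i ∈ Rk 6) → (∀ i, y i ∈ Rk 6) →
      dotF 6 H x y ∈ Set.range ((↑) : ℤ → ℝ)) ∧
    (∀ v : Fin n → ℂ, (∀ i, v i ∈ Rk 6) → ∃ m : ℤ, dotF 6 H v v = 2 * (m : ℝ)) ∧
    {x : Fin n → ℂ | ∀ v : Fin n → ℂ, (∀ i, v i ∈ Rk 6) →
        dotF 6 H x v ∈ Set.range ((↑) : ℤ → ℝ)} =
      {x : Fin n → ℂ | ∀ i, x i ∈ Rk 6} :=
  modular_lattice_k6_even_unimodular_general n H hherm hmod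

end
end
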